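/- arXiv:2503.11150 — 2 statements merged into one kernel-verified Lean document; each statement's English description precedes it below -/
import Mathlib

section
/- Let G be a finite directed graph with vertex weights α : V → ℝ and transition times τ : V → ℤ_{>0}. Then for every t ≥ 2, the maximum of the relative weight W(c) over simple cycles c in G is at most the supremum of W(i) over all paths i of length t in G. -/
/-!
Cut the cycle into its `T` cyclic windows of `t` consecutive vertices. Each vertex of the cycle
lies in exactly `t` windows, so the windows' weights and times add up to `t` times those of the
cycle, and by the mediant inequality some window, itself a path of length `t`, has relative
weight at least that of the cycle.
-/

open Finset

theorem Finset.exists_sum_div_sum_le_div {ι 𝕜 : Type*} [Field 𝕜] [LinearOrder 𝕜]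
    [IsStrictOrderedRing 𝕜] {s : Finset ι} (hs : s.Nonempty) (f : ι → 𝕜) {g : ι → 𝕜}
    (hg : ∀ i ∈ s, 0 < g i) :
    ∃ i ∈ s, (∑ j ∈ s, f j) / (∑ j ∈ s, g j) ≤ f i / g i := by
  set q := (∑ j ∈ s, f j) / (∑ j ∈ s, g j)
  have hsum : ∑ j ∈ s, q * g j = ∑ j ∈ s, f j := by
    rw [← mul_sum, div_mul_cancel₀ _ (sum_pos hg hs).ne']
  obtain ⟨i, hi, hle⟩ := exists_le_of_sum_le hs hsum.le
  exact ⟨i, hi, (le_div_iff₀ (hg i hi)).2 hle⟩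

theorem Finset.sum_range_add_mod {M : Type*} [AddCommMonoid M] {T : ℕ} (hT : 0 < T)
    (h : ℕ → M) (s : ℕ) :
    ∑ r ∈ range T, h ((r + s) % T) = ∑ r ∈ range T, h r := by
  have : NeZero T := ⟨hT.ne'⟩
  rw [← Fin.sum_univ_eq_sum_range (fun r => h ((r + s) % T)), ← Fin.sum_univ_eq_sum_range h]
  exact Fintype.sum_equiv (Equiv.addRight (Fin.ofNat T s)) _ _ fun r => by
    simp only [Equiv.coe_addRight, Fin.val_add, Fin.val_ofNat, Nat.add_mod_mod]

theorem Finset.sum_range_sum_range_add_mod {M : Type*} [AddCommMonoid M] {T : ℕ} (hT : 0 < T)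
    (h : ℕ → M) (t : ℕ) :
    ∑ r ∈ range T, ∑ s ∈ range t, h ((r + s) % T) = t • ∑ r ∈ range T, h r := by
  rw [sum_comm]
  simp only [sum_range_add_mod hT, sum_const, card_range]

section

variable {V : Type*}

noncomputable def relWeight (α : V → ℝ) (τ : V → ℕ) (t : ℕ) (i : ℕ → V) : ℝ :=
  (∑ s ∈ range t, α (i s)) / (∑ s ∈ range t, (τ (i s) : ℝ))

theorem finite_range_relWeight [Finite V] (α : V → ℝ) (τ : V → ℕ) (t : ℕ) :
    (Set.range (relWeight α τ t)).Finite := by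
  refine (Set.finite_range fun p : Fin t → V =>
    (∑ s, α (p s)) / (∑ s, (τ (p s) : ℝ))).subset ?_
  rintro _ ⟨i, rfl⟩
  exact ⟨fun s => i s, by simp only [relWeight, Fin.sum_univ_eq_sum_range (fun s => α (i s)),
    Fin.sum_univ_eq_sum_range (fun s => (τ (i s) : ℝ))]⟩

theorem exists_relWeight_le_relWeight_window (α : V → ℝ) {τ : V → ℕ} (hτ : ∀ v, 0 < τ v)
    {t T : ℕ} (ht : 0 < t) (hT : 0 < T) (c : ℕ → V) :
    ∃ r, relWeight α τ T c ≤ relWeight α τ t fun s => c ((r + s) % T) := by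
  have hpos : ∀ r ∈ range T, 0 < ∑ s ∈ range t, (τ (c ((r + s) % T)) : ℝ) := fun _ _ =>
    sum_pos (fun _ _ => by exact_mod_cast hτ _) (nonempty_range_iff.2 ht.ne')
  obtain ⟨r, -, hr⟩ := exists_sum_div_sum_le_div (nonempty_range_iff.2 hT.ne')
    (fun r => ∑ s ∈ range t, α (c ((r + s) % T))) hpos
  refine ⟨r, le_of_eq_of_le ?_ hr⟩
  rw [sum_range_sum_range_add_mod hT (fun k => α (c k)),
    sum_range_sum_range_add_mod hT (fun k => (τ (c k) : ℝ)),
    nsmul_eq_mul, nsmul_eq_mul, mul_div_mul_left _ _ (by exact_mod_cast ht.ne')]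
  rfl

end

theorem simple_cycle_weight_le_sup_path_weight_general
    {V : Type*} [Fintype V]
    (E : V → V → Prop) (α : V → ℝ) (τ : V → ℕ) (hτ : ∀ v, 0 < τ v)
    (t : ℕ) (ht : 2 ≤ t)
    (T : ℕ) (hT : 0 < T) (c : ℕ → V)
    (hcyc : ∀ s < T, E (c s) (c ((s + 1) % T))) :
    (∑ s ∈ Finset.range T, α (c s)) / (∑ s ∈ Finset.range T, (τ (c s) : ℝ)) ≤
      ⨆ i : {i : ℕ → V // ∀ s, s + 2 ≤ t → E (i s) (i (s + 1))},
        (∑ s ∈ Finset.range t, α (i.1 s)) /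
          (∑ s ∈ Finset.range t, (τ (i.1 s) : ℝ)) := by
  obtain ⟨r, hr⟩ := exists_relWeight_le_relWeight_window α hτ (by omega : 0 < t) hT c
  have hwindow : ∀ s, s + 2 ≤ t → E (c ((r + s) % T)) (c ((r + (s + 1)) % T)) := fun s _ => by
    rw [← Nat.add_assoc, ← Nat.mod_add_mod (r + s) T 1]
    exact hcyc _ (Nat.mod_lt _ hT)
  have hbdd : BddAbove (Set.range fun i : {i : ℕ → V // ∀ s, s + 2 ≤ t → E (i s) (i (s + 1))} =>
      relWeight α τ t i.1) :=
    ((finite_range_relWeight α τ t).subset (Set.range_comp_subset_range _ _)).bddAbove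
  exact hr.trans (le_ciSup hbdd ⟨_, hwindow⟩)

/-- For every `t ≥ 2`, the relative weight of any simple cycle is at most the supremum of
relative weights over all paths of length `t` (i.e. with `t` vertices) in the graph. -/
theorem simple_cycle_weight_le_sup_path_weight
    {V : Type*} [Fintype V]
    (E : V → V → Prop) (α : V → ℝ) (τ : V → ℕ) (hτ : ∀ v, 0 < τ v)
    (t : ℕ) (ht : 2 ≤ t)
    (T : ℕ) (hT : 0 < T) (c : ℕ → V)
    (hinj : ∀ s < T, ∀ s' < T, c s = c s' → s = s')
    (hcyc : ∀ s < T, E (c s) (c ((s + 1) % T))) :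
    (∑ s ∈ Finset.range T, α (c s)) / (∑ s ∈ Finset.range T, (τ (c s) : ℝ)) ≤
      ⨆ i : {i : ℕ → V // ∀ s, s + 2 ≤ t → E (i s) (i (s + 1))},
        (∑ s ∈ Finset.range t, α (i.1 s)) /
          (∑ s ∈ Finset.range t, (τ (i.1 s) : ℝ)) :=
  simple_cycle_weight_le_sup_path_weight_general E α τ hτ t ht T hT c hcyc
end

section
/- Let L : E → F be a linear map between finite-dimensional inner product spaces with dim E = n, and 1 ≤ m ≤ n. Then the operator norm of the induced map L^∧m : E^∧m → F^∧m on m-th exterior powers (with the induced inner products) equals the product α_1(L)·α_2(L)⋯α_m(L) of the m largest singular values of L. -/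
/-!
With `A i k = ⟪w i, v k⟫`, the Gram matrices of `w` and of `L ∘ w` are `A Aᵀ` and
`A diag(σ²) Aᵀ`. By Cauchy–Binet both determinants expand over the `m`-element sets `S` of
columns, as `∑ det(A_S)²` and `∑ (∏_{k ∈ S} σ_k²) det(A_S)²`. Since `σ` is antitone, every weight
`∏_{k ∈ S} σ_k²` is at most `σ_1² ⋯ σ_m²`, which bounds the second determinant by
`σ_1² ⋯ σ_m²` times the first; equality holds for `w = (v_1, …, v_m)`.
-/

open Matrix Finset Function Equiv

open Classical in
theorem Fintype.sum_eq_sum_strictMono_sum_perm {α M : Type*} [LinearOrder α] [Fintype α]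
    [AddCommMonoid M] {m : ℕ} (F : (Fin m → α) → M) (hF : ∀ f, ¬ Injective f → F f = 0) :
    ∑ f, F f = ∑ g ∈ univ.filter StrictMono, ∑ τ : Perm (Fin m), F (g ∘ τ) := by
  rw [← sum_filter_of_ne (p := Injective) fun f _ => not_imp_comm.mp (hF f), ← sum_product']
  symm
  -- an injective `f` factors uniquely as `(f ∘ sort f) ∘ (sort f)⁻¹`, the first factor strictly
  -- monotone
  refine sum_nbij' (fun p => p.1 ∘ p.2) (fun f => (f ∘ Tuple.sort f, (Tuple.sort f)⁻¹))
    ?_ ?_ ?_ ?_ fun _ _ => rfl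
  · rintro ⟨g, τ⟩ h
    simp only [mem_product, mem_filter, mem_univ, true_and, and_true] at h ⊢
    exact h.injective.comp τ.injective
  · intro f hf
    simp only [mem_product, mem_filter, mem_univ, true_and, and_true] at hf ⊢
    exact (Tuple.monotone_sort f).strictMono_of_injective (hf.comp (Tuple.sort f).injective)
  · rintro ⟨g, τ⟩ h
    simp only [mem_product, mem_filter, mem_univ, true_and, and_true] at h
    have hsort : τ⁻¹ = Tuple.sort (g ∘ τ) := Tuple.eq_sort_iff.mpr
      ⟨by convert h.monotone; ext; simp,
       fun i j hij heq => absurd (by simpa using h.injective heq) hij.ne⟩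
    rw [← hsort]
    ext <;> simp
  · intro f _
    ext
    simp

theorem Fin.castLE_le_of_strictMono {m n : ℕ} (hmn : m ≤ n) {g : Fin m → Fin n}
    (hg : StrictMono g) (i : Fin m) : Fin.castLE hmn i ≤ g i := by
  obtain ⟨k, hk⟩ := i
  show k ≤ (g ⟨k, hk⟩ : ℕ)
  induction k with
  | zero => exact Nat.zero_le _
  | succ k ih =>
    have hlt : (g ⟨k, k.lt_succ_self.trans hk⟩ : ℕ) < g ⟨k + 1, hk⟩ :=
      hg (Fin.mk_lt_mk.mpr k.lt_succ_self)
    have := ih (k.lt_succ_self.trans hk)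
    omega

namespace Matrix

section CommRing

variable {R : Type*} [CommRing R]

theorem det_mul_eq_sum_prod_mul_det_submatrix {ι κ : Type*} [Fintype ι] [DecidableEq ι]
    [Fintype κ] [DecidableEq κ] (B : Matrix ι κ R) (C : Matrix κ ι R) :
    (B * C).det = ∑ f : ι → κ, (∏ i, C (f i) i) * (B.submatrix id f).det := by
  simp only [det_apply', mul_apply, prod_univ_sum, mul_sum, Fintype.piFinset_univ]
  rw [sum_comm]
  refine sum_congr rfl fun f _ => sum_congr rfl fun σ _ => ?_
  simp only [submatrix_apply, id, prod_mul_distrib]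
  ring

variable {m : ℕ} {κ : Type*} [Fintype κ] [LinearOrder κ]

theorem det_mul_eq_sum_det_submatrix_mul_det_submatrix [DecidableEq κ]
    (B : Matrix (Fin m) κ R) (C : Matrix κ (Fin m) R) :
    (B * C).det =
      ∑ g ∈ univ.filter StrictMono, (B.submatrix id g).det * (C.submatrix g id).det := by
  rw [det_mul_eq_sum_prod_mul_det_submatrix, Fintype.sum_eq_sum_strictMono_sum_perm]
  · refine sum_congr rfl fun g _ => ?_
    rw [det_apply' (C.submatrix g id), mul_sum]
    refine sum_congr rfl fun τ _ => ?_
    rw [show B.submatrix id (g ∘ τ) = (B.submatrix id g).submatrix id τ from rfl, det_permute']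
    simp only [submatrix_apply, id, Function.comp_apply]
    ring
  · intro f hf
    obtain ⟨i, j, hij, hne⟩ := not_injective_iff.mp hf
    rw [det_zero_of_column_eq hne fun k => by simp [hij], mul_zero]

theorem det_mul_diagonal_mul_transpose [DecidableEq κ] (A : Matrix (Fin m) κ R) (d : κ → R) :
    (A * diagonal d * Aᵀ).det =
      ∑ g ∈ univ.filter StrictMono, (∏ i, d (g i)) * (A.submatrix id g).det ^ 2 := by
  rw [det_mul_eq_sum_det_submatrix_mul_det_submatrix]
  refine sum_congr rfl fun g _ => ?_
  have hcols : (A * diagonal d).submatrix id g = A.submatrix id g * diagonal (d ∘ g) := by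
    ext i j
    simp
  rw [hcols, det_mul, det_diagonal, ← transpose_submatrix, det_transpose]
  simp only [Function.comp_apply]
  ring

end CommRing

theorem det_mul_diagonal_mul_transpose_le {R : Type*} [CommRing R] [LinearOrder R]
    [IsStrictOrderedRing R] {m n : ℕ} (hmn : m ≤ n) (A : Matrix (Fin m) (Fin n) R)
    {d : Fin n → R} (hd0 : ∀ k, 0 ≤ d k) (hd : Antitone d) :
    (A * diagonal d * Aᵀ).det ≤ (∏ i, d (Fin.castLE hmn i)) * (A * Aᵀ).det := by
  have hone := det_mul_diagonal_mul_transpose A fun _ => (1 : R)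
  rw [diagonal_one, Matrix.mul_one] at hone
  rw [hone, det_mul_diagonal_mul_transpose, mul_sum]
  refine sum_le_sum fun g hg => ?_
  rw [prod_const_one, one_mul]
  refine mul_le_mul_of_nonneg_right (prod_le_prod (fun i _ => hd0 _) fun i _ => ?_) (sq_nonneg _)
  exact hd (Fin.castLE_le_of_strictMono hmn (mem_filter.mp hg).2 i)

end Matrix

section Gram

variable {E F : Type*} [NormedAddCommGroup E] [InnerProductSpace ℝ E] [FiniteDimensional ℝ E]
  [NormedAddCommGroup F] [InnerProductSpace ℝ F] [FiniteDimensional ℝ F]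
  {L : E →ₗ[ℝ] F} {ι : Type*} [DecidableEq ι] {d : ι → ℝ}

theorem gram_comp_eq_diagonal_of_orthonormal {v : ι → E} (hv : Orthonormal ℝ v)
    (h : ∀ i, LinearMap.adjoint L (L (v i)) = d i • v i) : gram ℝ (L ∘ v) = diagonal d := by
  ext i j
  rw [gram_apply, Function.comp_apply, Function.comp_apply, ← LinearMap.adjoint_inner_left, h,
    real_inner_smul_left, orthonormal_iff_ite.mp hv, diagonal_apply]
  split_ifs with hij
  · rw [hij, mul_one]
  · rw [mul_zero]

theorem gram_comp_eq_transpose_mul_diagonal_mul [Fintype ι] (b : OrthonormalBasis ι ℝ E)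
    (h : ∀ k, LinearMap.adjoint L (L (b k)) = d k • b k) {n : Type*} (w : n → E) :
    gram ℝ (L ∘ w) = (b.toBasis.toMatrix w)ᵀ * diagonal d * b.toBasis.toMatrix w := by
  ext i j
  have hself : ∀ x y,
      inner ℝ (LinearMap.adjoint L (L x)) y = inner ℝ x (LinearMap.adjoint L (L y)) :=
    fun x y => by rw [LinearMap.adjoint_inner_left, LinearMap.adjoint_inner_right]
  rw [gram_apply, Function.comp_apply, Function.comp_apply, ← LinearMap.adjoint_inner_left,
    ← b.sum_inner_mul_inner, mul_apply]
  simp only [mul_diagonal, transpose_apply, Module.Basis.toMatrix_apply,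
    OrthonormalBasis.coe_toBasis_repr_apply, b.repr_apply_apply]
  refine sum_congr rfl fun k _ => ?_
  rw [hself, h, inner_smul_right, real_inner_comm]
  ring

end Gram

theorem norm_exterior_power_eq_prod_singular_values_general
    {E F : Type*} [NormedAddCommGroup E] [InnerProductSpace ℝ E] [FiniteDimensional ℝ E]
    [NormedAddCommGroup F] [InnerProductSpace ℝ F] [FiniteDimensional ℝ F]
    {n m : ℕ} (hn : Module.finrank ℝ E = n) (hmn : m ≤ n)
    (L : E →ₗ[ℝ] F)
    (σ : Fin n → ℝ) (hσa : Antitone σ) (hσ0 : ∀ i, 0 ≤ σ i)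
    (v : Fin n → E) (hv : Orthonormal ℝ v)
    (heig : ∀ i, LinearMap.adjoint L (L (v i)) = σ i ^ 2 • v i) :
    IsGreatest
      {r : ℝ | ∃ w : Fin m → E,
        Real.sqrt (Matrix.det (Matrix.of fun i j : Fin m => (inner ℝ (w i) (w j) : ℝ))) = 1 ∧
        r = Real.sqrt
          (Matrix.det (Matrix.of fun i j : Fin m => (inner ℝ (L (w i)) (L (w j)) : ℝ)))}
      (∏ i : Fin m, σ (Fin.castLE hmn i)) := by
  have hprod : ∏ i, σ (Fin.castLE hmn i) = √(∏ i, σ (Fin.castLE hmn i) ^ 2) := by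
    rw [prod_pow, Real.sqrt_sq (prod_nonneg fun i _ => hσ0 _)]
  have hv' : Orthonormal ℝ (v ∘ Fin.castLE hmn) := hv.comp _ (Fin.castLE_injective hmn)
  refine ⟨⟨v ∘ Fin.castLE hmn, ?_, ?_⟩, ?_⟩
  · change √(gram ℝ (v ∘ Fin.castLE hmn)).det = 1
    rw [gram_eq_one_iff_orthonormal.mpr hv', det_one, Real.sqrt_one]
  · change _ = √(gram ℝ (L ∘ v ∘ Fin.castLE hmn)).det
    rw [gram_comp_eq_diagonal_of_orthonormal hv' fun i => heig _, det_diagonal, hprod]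
  · rintro r ⟨w, hw, rfl⟩
    let b := OrthonormalBasis.mk hv
      (hv.linearIndependent.span_eq_top_of_card_eq_finrank' (by simp [hn])).ge
    set A := (b.toBasis.toMatrix w)ᵀ
    have hgram : gram ℝ w = A * Aᵀ := by
      rw [gram_eq_conjTranspose_mul b, conjTranspose_eq_transpose_of_trivial, transpose_transpose]
      rfl
    have hdet : (A * Aᵀ).det = 1 := by
      rw [← hgram]
      exact Real.sqrt_eq_one.mp hw
    have hgramL : gram ℝ (L ∘ w) = A * diagonal (fun k => σ k ^ 2) * Aᵀ := by
      rw [gram_comp_eq_transpose_mul_diagonal_mul b (by simpa [b] using heig), transpose_transpose]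
    change √(gram ℝ (L ∘ w)).det ≤ _
    rw [hgramL, hprod]
    gcongr
    simpa [hdet] using det_mul_diagonal_mul_transpose_le hmn A (fun k => sq_nonneg (σ k))
      fun a c hac => pow_le_pow_left₀ (hσ0 c) (hσa hac) 2

/-- The operator norm of the `m`-th exterior power of a linear map `L` between
finite-dimensional inner product spaces — i.e. the supremum (here: greatest value) of the
`m`-volume `|Lw_1 ∧ ⋯ ∧ Lw_m|` over decomposable unit `m`-volumes `|w_1 ∧ ⋯ ∧ w_m| = 1`,
where volumes are computed by Gram determinants — equals the product `α_1(L)⋯α_m(L)` of the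
`m` largest singular values of `L` (given as the antitone family of nonnegative `σ i` with an
orthonormal eigenbasis of `L*L` for the eigenvalues `σ i ^ 2`). -/
theorem norm_exterior_power_eq_prod_singular_values
    {E F : Type*} [NormedAddCommGroup E] [InnerProductSpace ℝ E] [FiniteDimensional ℝ E]
    [NormedAddCommGroup F] [InnerProductSpace ℝ F] [FiniteDimensional ℝ F]
    {n m : ℕ} (hn : Module.finrank ℝ E = n) (hm : 1 ≤ m) (hmn : m ≤ n)
    (L : E →ₗ[ℝ] F)
    (σ : Fin n → ℝ) (hσa : Antitone σ) (hσ0 : ∀ i, 0 ≤ σ i)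
    (v : Fin n → E) (hv : Orthonormal ℝ v)
    (heig : ∀ i, LinearMap.adjoint L (L (v i)) = σ i ^ 2 • v i) :
    IsGreatest
      {r : ℝ | ∃ w : Fin m → E,
        Real.sqrt (Matrix.det (Matrix.of fun i j : Fin m => (inner ℝ (w i) (w j) : ℝ))) = 1 ∧
        r = Real.sqrt
          (Matrix.det (Matrix.of fun i j : Fin m => (inner ℝ (L (w i)) (L (w j)) : ℝ)))}
      (∏ i : Fin m, σ (Fin.castLE hmn i)) :=
  norm_exterior_power_eq_prod_singular_values_general hn hmn L σ hσa hσ0 v hv heig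
end
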